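/- arXiv:1710.06838 — 2 statements merged into one kernel-verified Lean document; each statement's English description precedes it below -/
import Mathlib

section
/- For the cyclic 2×2 game, if the transition probabilities of the four-state Markov chain are chosen proportionally to the payoff gaps, namely ρ_1 = (p_1(D,L) − p_1(U,L))(p_2(U,L) − p_2(U,R))·ρ_0, ρ_2 = (p_1(U,R) − p_1(D,R))(p_2(U,L) − p_2(U,R))·ρ_0, ρ_3 = (p_1(D,L) − p_1(U,L))(p_2(D,R) − p_2(D,L))·ρ_0, and ρ_4 = (p_1(U,R) − p_1(D,R))(p_2(D,R) − p_2(D,L))·ρ_0 for some ρ_0 > 0 making each ρ_k lie in (0,1), then the vector π = [ab, a(1−b), (1−a)b, (1−a)(1−b)] satisfies π Z = π, i.e., π is a stationary distribution of the chain. -/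
open Matrix

/-- Agent 1's strategy set {U, D}. -/
inductive Strat1 : Type
  | U : Strat1
  | D : Strat1

/-- Agent 2's strategy set {L, R}. -/
inductive Strat2 : Type
  | L : Strat2
  | R : Strat2

open Strat1 Strat2

/-- For the cyclic 2×2 game, if the transition probabilities of
the four-state Markov chain (states ordered (U,L), (U,R), (D,L), (D,R)) are
chosen proportionally to the payoff gaps via a factor `ρ₀ > 0` keeping each
`ρ_k` in (0,1), then `π = [ab, a(1−b), (1−a)b, (1−a)(1−b)]` satisfies
`π Z = π`, i.e. `π` is a stationary distribution. -/
theorem cyclic_game_stationary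
    (p1 p2 : Strat1 → Strat2 → ℝ)
    (h1 : p1 U L < p1 D L) (h2 : p1 D R < p1 U R)
    (h3 : p2 U R < p2 U L) (h4 : p2 D L < p2 D R)
    (a b : ℝ)
    (ha : a = (p2 D R - p2 D L) / (p2 D R - p2 D L + p2 U L - p2 U R))
    (hb : b = (p1 U R - p1 D R) / (p1 U R - p1 D R + p1 D L - p1 U L))
    (ρ0 ρ1 ρ2 ρ3 ρ4 : ℝ) (hρ0 : 0 < ρ0)
    (hρ1 : ρ1 = (p1 D L - p1 U L) * (p2 U L - p2 U R) * ρ0)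
    (hρ2 : ρ2 = (p1 U R - p1 D R) * (p2 U L - p2 U R) * ρ0)
    (hρ3 : ρ3 = (p1 D L - p1 U L) * (p2 D R - p2 D L) * ρ0)
    (hρ4 : ρ4 = (p1 U R - p1 D R) * (p2 D R - p2 D L) * ρ0)
    (hρ1' : ρ1 < 1) (hρ2' : ρ2 < 1) (hρ3' : ρ3 < 1) (hρ4' : ρ4 < 1)
    (Z : Matrix (Fin 4) (Fin 4) ℝ)
    (hZ : Z = !![1 - ρ1, 0, ρ1, 0;
                 ρ2, 1 - ρ2, 0, 0;
                 0, 0, 1 - ρ3, ρ3;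
                 0, ρ4, 0, 1 - ρ4])
    (π : Fin 4 → ℝ)
    (hπ : π = ![a * b, a * (1 - b), (1 - a) * b, (1 - a) * (1 - b)]) :
    π ᵥ* Z = π := by
  have hA : (0:ℝ) < p2 D R - p2 D L + p2 U L - p2 U R := by linarith
  have hB : (0:ℝ) < p1 U R - p1 D R + p1 D L - p1 U L := by linarith
  have hA' := hA.ne'
  have hB' := hB.ne'
  subst ha hb hρ1 hρ2 hρ3 hρ4 hZ hπ
  funext i
  fin_cases i <;>
    simp [vecMul, dotProduct, Fin.sum_univ_four, Matrix.cons_val_zero,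
      Matrix.cons_val_one, Matrix.vecHead, Matrix.vecTail] <;>
    field_simp <;> ring
end

section
/- For the cyclic 2×2 game with transition probabilities satisfying ρ_1 : ρ_2 : ρ_3 : ρ_4 = (p_1(D,L) − p_1(U,L))(p_2(U,L) − p_2(U,R)) : (p_1(U,R) − p_1(D,R))(p_2(U,L) − p_2(U,R)) : (p_1(D,L) − p_1(U,L))(p_2(D,R) − p_2(D,L)) : (p_1(U,R) − p_1(D,R))(p_2(D,R) − p_2(D,L)), the vector π = [ab, a(1−b), (1−a)b, (1−a)(1−b)] is the UNIQUE stationary distribution of the Markov chain: any row vector π' with nonnegative entries summing to 1 satisfying π' Z = π' equals π. -/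
open Matrix

open Strat1 Strat2

/-- For the cyclic 2×2 game with transition probabilities in the
ratio `ρ₁ : ρ₂ : ρ₃ : ρ₄ =
(p₁(D,L)−p₁(U,L))(p₂(U,L)−p₂(U,R)) : (p₁(U,R)−p₁(D,R))(p₂(U,L)−p₂(U,R)) :
(p₁(D,L)−p₁(U,L))(p₂(D,R)−p₂(D,L)) : (p₁(U,R)−p₁(D,R))(p₂(D,R)−p₂(D,L))`,
the vector `π = [ab, a(1−b), (1−a)b, (1−a)(1−b)]` is the unique stationary
distribution of the Markov chain: `π Z = π`, and any nonnegative row vector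
summing to 1 that is fixed by `Z` equals `π`. -/
theorem cyclic_game_unique_stationary
    (p1 p2 : Strat1 → Strat2 → ℝ)
    (h1 : p1 U L < p1 D L) (h2 : p1 D R < p1 U R)
    (h3 : p2 U R < p2 U L) (h4 : p2 D L < p2 D R)
    (a b : ℝ)
    (ha : a = (p2 D R - p2 D L) / (p2 D R - p2 D L + p2 U L - p2 U R))
    (hb : b = (p1 U R - p1 D R) / (p1 U R - p1 D R + p1 D L - p1 U L))
    (ρ1 ρ2 ρ3 ρ4 : ℝ)
    (hρ1 : 0 < ρ1) (hρ1' : ρ1 < 1)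
    (hρ2 : 0 < ρ2) (hρ2' : ρ2 < 1)
    (hρ3 : 0 < ρ3) (hρ3' : ρ3 < 1)
    (hρ4 : 0 < ρ4) (hρ4' : ρ4 < 1)
    -- ρ₁ : ρ₂ : ρ₃ : ρ₄ equals the ratio of the payoff-gap products
    (hratio : ∃ ρ0 : ℝ,
      ρ1 = (p1 D L - p1 U L) * (p2 U L - p2 U R) * ρ0 ∧
      ρ2 = (p1 U R - p1 D R) * (p2 U L - p2 U R) * ρ0 ∧
      ρ3 = (p1 D L - p1 U L) * (p2 D R - p2 D L) * ρ0 ∧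
      ρ4 = (p1 U R - p1 D R) * (p2 D R - p2 D L) * ρ0)
    (Z : Matrix (Fin 4) (Fin 4) ℝ)
    (hZ : Z = !![1 - ρ1, 0, ρ1, 0;
                 ρ2, 1 - ρ2, 0, 0;
                 0, 0, 1 - ρ3, ρ3;
                 0, ρ4, 0, 1 - ρ4])
    (π : Fin 4 → ℝ)
    (hπ : π = ![a * b, a * (1 - b), (1 - a) * b, (1 - a) * (1 - b)]) :
    π ᵥ* Z = π ∧
    ∀ π' : Fin 4 → ℝ, (∀ i, 0 ≤ π' i) → (∑ i, π' i = 1) →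
      π' ᵥ* Z = π' → π' = π := by
  obtain ⟨ρ0, hr1, hr2, hr3, hr4⟩ := hratio
  have hA : (0:ℝ) < p1 D L - p1 U L := by linarith
  have hB : (0:ℝ) < p1 U R - p1 D R := by linarith
  have hC : (0:ℝ) < p2 U L - p2 U R := by linarith
  have hD : (0:ℝ) < p2 D R - p2 D L := by linarith
  have hAB : p1 U R - p1 D R + p1 D L - p1 U L ≠ 0 := by linarith
  have hCD : p2 D R - p2 D L + p2 U L - p2 U R ≠ 0 := by linarith
  -- stationarity of π
  have hstat : π ᵥ* Z = π := by
    funext j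
    fin_cases j <;>
      simp [hZ, hπ, Matrix.vecMul, dotProduct, Fin.sum_univ_four, Matrix.vecHead, Matrix.vecTail, ha, hb,
        hr1, hr2, hr3, hr4] <;>
      field_simp <;> ring
  refine ⟨hstat, ?_⟩
  intro π' _ hsum hfix
  -- component equations
  have eqs : ∀ x : Fin 4 → ℝ, x ᵥ* Z = x →
      ρ2 * x 1 = ρ1 * x 0 ∧ ρ4 * x 3 = ρ2 * x 1 ∧ ρ1 * x 0 = ρ3 * x 2 := by
    intro x hx
    have h0 := congrFun hx 0
    have h1' := congrFun hx 1
    have h2' := congrFun hx 2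
    simp [hZ, Matrix.vecMul, dotProduct, Fin.sum_univ_four, Matrix.vecHead, Matrix.vecTail] at h0 h1' h2'
    refine ⟨by linarith [h0], by linarith [h1'], by linarith [h2']⟩
  obtain ⟨e1, e2, e3⟩ := eqs π' hfix
  obtain ⟨f1, f2, f3⟩ := eqs π hstat
  have hsum' : π' 0 + π' 1 + π' 2 + π' 3 = 1 := by
    have := hsum
    simpa [Fin.sum_univ_four] using this
  have hsumπ : π 0 + π 1 + π 2 + π 3 = 1 := by
    simp [hπ]; ring
  have hK : (0:ℝ) < ρ2*ρ3*ρ4 + ρ1*ρ3*ρ4 + ρ1*ρ2*ρ4 + ρ1*ρ2*ρ3 := by positivity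
  have key : ∀ x : Fin 4 → ℝ,
      ρ2 * x 1 = ρ1 * x 0 → ρ4 * x 3 = ρ2 * x 1 → ρ1 * x 0 = ρ3 * x 2 →
      x 0 + x 1 + x 2 + x 3 = 1 →
      x 0 = ρ2*ρ3*ρ4 / (ρ2*ρ3*ρ4 + ρ1*ρ3*ρ4 + ρ1*ρ2*ρ4 + ρ1*ρ2*ρ3) := by
    intro x g1 g2 g3 gs
    rw [eq_div_iff hK.ne']
    linear_combination ρ2*ρ3*ρ4*gs - (ρ3*ρ4 + ρ2*ρ3)*g1 - ρ2*ρ3*g2 + ρ2*ρ4*g3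
  have h00 : π' 0 = π 0 := by
    rw [key π' e1 e2 e3 hsum', key π f1 f2 f3 hsumπ]
  funext i
  fin_cases i
  · exact h00
  · have : ρ2 * π' 1 = ρ2 * π 1 := by rw [e1, f1, h00]
    exact mul_left_cancel₀ hρ2.ne' this
  · have : ρ3 * π' 2 = ρ3 * π 2 := by rw [← e3, ← f3, h00]
    exact mul_left_cancel₀ hρ3.ne' this
  · have : ρ4 * π' 3 = ρ4 * π 3 := by
      rw [e2, f2, e1, f1, h00]
    exact mul_left_cancel₀ hρ4.ne' this
end
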